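/- Define the empirical error E(N, a₁, a₂) = (2(N+1) − 2(N−1) cos^{N−2}(2(a₁+a₂))) / (N(N−1)² sin²(a₂) (cos^{N−2}(a₂) + cos^{N−2}(2a₁+a₂))²). If a₁ = −c/√N and a₂ = c/√N for a constant c > 0, then N²·E(N, a₁, a₂) converges to 1/(c² e^{−c²}) as N → ∞. -/

import Mathlib

open Real Filter

/-- Empirical (method-of-moments) error at φ = 0 of the generalized protocol
e^{i a₂ J_z²} e^{−iφ J_y} e^{i a₁ J_z²}|+⟩^{⊗N}. -/
noncomputable def E (N : ℕ) (a₁ a₂ : ℝ) : ℝ :=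
  (2 * ((N : ℝ) + 1) - 2 * ((N : ℝ) - 1) * Real.cos (2 * (a₁ + a₂)) ^ (N - 2)) /
    ((N : ℝ) * ((N : ℝ) - 1) ^ 2 * Real.sin a₂ ^ 2 *
      (Real.cos a₂ ^ (N - 2) + Real.cos (2 * a₁ + a₂) ^ (N - 2)) ^ 2)

/-
Along a₁ = −a₂ the numerator of E collapses to 4 and both cosine powers equal cos^{N−2} a₂,
so N²·E = (N/(N−1))² / (N sin² a₂ · (cos² a₂)^{N−2}). With a₂ = c/√N, N sin² a₂ → c² because
sin x ~ x, and (cos² a₂)^{N−2} = (1 − sin² a₂)^{N−2} → e^{−c²} since N · sin² a₂ → c².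
-/

open Topology

namespace Real

lemma mul_sinc (x : ℝ) : x * sinc x = sin x := by
  rcases eq_or_ne x 0 with rfl | hx
  · simp
  · rw [sinc_of_ne_zero hx, mul_div_cancel₀ _ hx]

lemma tendsto_one_add_pow_sub_exp_of_tendsto {g : ℕ → ℝ} {t : ℝ} (k : ℕ)
    (hg : Tendsto (fun n ↦ n * g n) atTop (𝓝 t)) :
    Tendsto (fun n ↦ (1 + g n) ^ (n - k)) atTop (𝓝 (exp t)) := by
  have hg0 : Tendsto g atTop (𝓝 0) := by
    have := hg.mul (tendsto_inv_atTop_zero.comp tendsto_natCast_atTop_atTop)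
    rw [mul_zero] at this
    refine this.congr' ?_
    filter_upwards [eventually_ne_atTop 0] with n hn
    simp only [Function.comp_apply]
    field_simp
  have hg1 : Tendsto (fun n ↦ 1 + g n) atTop (𝓝 1) := by
    simpa using tendsto_const_nhds.add hg0
  have := (tendsto_one_add_pow_exp_of_tendsto hg).div (hg1.pow k) (by simp)
  rw [one_pow, div_one] at this
  refine this.congr' ?_
  filter_upwards [eventually_ge_atTop k, hg1.eventually_ne one_ne_zero] with n hkn hne
  exact (pow_sub₀ _ hne hkn).symm

lemma tendsto_nat_mul_sin_div_sqrt_sq (c : ℝ) :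
    Tendsto (fun n : ℕ ↦ n * sin (c / √n) ^ 2) atTop (𝓝 (c ^ 2)) := by
  have hx : Tendsto (fun n : ℕ ↦ c / √n) atTop (𝓝 0) :=
    tendsto_const_nhds.div_atTop (tendsto_sqrt_atTop.comp tendsto_natCast_atTop_atTop)
  have := (((continuous_sinc.tendsto 0).comp hx).pow 2).const_mul (c ^ 2)
  rw [sinc_zero, one_pow, mul_one] at this
  refine this.congr' ?_
  filter_upwards [eventually_ne_atTop 0] with n hn
  rw [Function.comp_apply, ← mul_sinc, mul_pow, div_pow, sq_sqrt n.cast_nonneg]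
  field_simp

lemma tendsto_cos_div_sqrt_sq_pow_sub (c : ℝ) (k : ℕ) :
    Tendsto (fun n : ℕ ↦ (cos (c / √n) ^ 2) ^ (n - k)) atTop (𝓝 (exp (-c ^ 2))) := by
  have hg : Tendsto (fun n : ℕ ↦ n * -sin (c / √n) ^ 2) atTop (𝓝 (-c ^ 2)) := by
    simpa only [mul_neg] using (tendsto_nat_mul_sin_div_sqrt_sq c).neg
  simpa only [cos_sq', sub_eq_add_neg] using tendsto_one_add_pow_sub_exp_of_tendsto k hg

end Real

lemma E_neg_left (N : ℕ) (a : ℝ) :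
    E N (-a) a = ((N : ℝ) * ((N : ℝ) - 1) ^ 2 * sin a ^ 2 * (cos a ^ 2) ^ (N - 2))⁻¹ := by
  have h₁ : 2 * (-a + a) = 0 := by ring
  have h₂ : 2 * -a + a = -a := by ring
  rw [E, h₁, h₂, cos_zero, one_pow, cos_neg, ← pow_mul, mul_comm 2 (N - 2), pow_mul]
  simp only [div_eq_mul_inv, mul_inv]
  ring

lemma sq_mul_E_neg_left (N : ℕ) (a : ℝ) :
    (N : ℝ) ^ 2 * E N (-a) a =
      ((N : ℝ) / ((N : ℝ) - 1)) ^ 2 * (N * sin a ^ 2 * (cos a ^ 2) ^ (N - 2))⁻¹ := by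
  rw [E_neg_left]
  simp only [div_eq_mul_inv, mul_inv, mul_pow, inv_pow]
  ring

/-- If a₁ = −c/√N and a₂ = c/√N with c > 0, then N²·E(N,a₁,a₂) → 1/(c² e^{−c²}). -/
theorem stmt_6 (c : ℝ) (hc : 0 < c) :
    Tendsto (fun N : ℕ =>
        (N : ℝ) ^ 2 * E N (-c / Real.sqrt (N : ℝ)) (c / Real.sqrt (N : ℝ)))
      atTop (nhds (1 / (c ^ 2 * Real.exp (-c ^ 2)))) := by
  have hratio : Tendsto (fun N : ℕ ↦ (N : ℝ) / ((N : ℝ) - 1)) atTop (𝓝 1) := by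
    simpa only [← sub_eq_add_neg] using tendsto_natCast_div_add_atTop (-1 : ℝ)
  have hden := (tendsto_nat_mul_sin_div_sqrt_sq c).mul (tendsto_cos_div_sqrt_sq_pow_sub c 2)
  have := (hratio.pow 2).mul (hden.inv₀ (by positivity))
  rw [one_pow, one_mul, ← one_div] at this
  simpa only [neg_div, sq_mul_E_neg_left] using this
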